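/- arXiv:1909.04284 — 2 statements merged into one kernel-verified Lean document; each statement's English description precedes it below -/
import Mathlib

section
/- Let p ≥ 3 be a prime and k ≥ 2 a natural number. Then for any α, β ∈ 𝓔_p one has |∑_{j=0}^{k−1} α^{k−1−j}·β^j − k|_p < |k|_p; equivalently, there exists γ ∈ 𝓔_p with ∑_{j=0}^{k−1} α^{k−1−j}·β^j = k·γ. -/
/-!
Write `α = β u`. Then `∑ α ^ (k - 1 - j) β ^ j = β ^ (k - 1) ∑ u ^ m` with `|β ^ (k - 1)| = 1`
and `|β ^ (k - 1) - 1| ≤ 1 / p`, so it suffices to show `|∑_{m<k} u ^ m - k| ≤ |k| / p`.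
With `u = 1 + x`, `|x| ≤ 1 / p`, the hockey-stick identity gives
`∑_{m<k} u ^ m - k = ∑_{i ≥ 1} C(k, i + 1) x ^ i`, and each term is at most `|k| / p`:
`(i + 2) C(k, i + 2) = k C(k - 1, i + 1)` bounds `|C(k, i + 2)|` by `|k| / |i + 2|`, and
`p ^ (i + 1) ∤ i + 2` because `p ^ (i + 1) ≥ 3 ^ (i + 1) > i + 2`.
-/

open Finset

theorem geom_sum_one_add_eq_sum_choose {R : Type*} [CommRing R] (x : R) (n : ℕ) :
    ∑ i ∈ range n, (1 + x) ^ i = ∑ i ∈ range n, (n.choose (i + 1) : R) * x ^ i := by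
  simpa [Polynomial.eval_finsetSum, add_comm] using
    congrArg (Polynomial.eval x) (Polynomial.geom_sum_X_comp_X_add_one_eq_sum (R := R) n)

theorem geom_sum₂_mul_eq_pow_mul_geom_sum {R : Type*} [CommSemiring R] (x y : R) (n : ℕ) :
    ∑ i ∈ range n, (x * y) ^ (n - 1 - i) * y ^ i = y ^ (n - 1) * ∑ i ∈ range n, x ^ i := by
  rw [mul_sum, ← sum_range_reflect]
  refine sum_congr rfl fun i hi => ?_
  rw [mul_pow, mul_assoc, ← pow_add, mul_comm]
  congr 2 <;> grind

section Ultrametric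

variable {R : Type*} [NormedRing R] [NormOneClass R] [IsUltrametricDist R]

theorem norm_eq_one_of_norm_sub_one_lt_one {x : R} (h : ‖x - 1‖ < 1) : ‖x‖ = 1 := by
  have hmax := IsUltrametricDist.norm_add_eq_max_of_norm_ne_norm (x := x - 1) (y := 1)
    (by simpa using h.ne)
  simpa [h.le] using hmax

theorem norm_pow_sub_one_le {x : R} (hx : ‖x‖ ≤ 1) (n : ℕ) : ‖x ^ n - 1‖ ≤ ‖x - 1‖ := by
  have hsum : ‖∑ i ∈ range n, x ^ i‖ ≤ 1 :=
    IsUltrametricDist.norm_sum_le_of_forall_le_of_nonneg zero_le_one fun i _ =>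
      (norm_pow_le x i).trans (pow_le_one₀ (norm_nonneg x) hx)
  calc ‖x ^ n - 1‖ = ‖(∑ i ∈ range n, x ^ i) * (x - 1)‖ := by rw [geom_sum_mul]
    _ ≤ ‖∑ i ∈ range n, x ^ i‖ * ‖x - 1‖ := norm_mul_le _ _
    _ ≤ ‖x - 1‖ := mul_le_of_le_one_left (norm_nonneg _) hsum

end Ultrametric

theorem norm_div_sub_one_le {K : Type*} [NormedField K] [IsUltrametricDist K] {x y : K}
    (hy : ‖y‖ = 1) : ‖x / y - 1‖ ≤ max ‖x - 1‖ ‖y - 1‖ := by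
  have hy0 : y ≠ 0 := norm_ne_zero_iff.mp (by simp [hy])
  rw [div_sub_one hy0, norm_div, hy, div_one, ← dist_eq_norm, ← dist_eq_norm, ← dist_eq_norm,
    dist_comm y]
  exact IsUltrametricDist.dist_triangle_max x 1 y

namespace Padic

variable {p : ℕ} [Fact p.Prime]

theorem norm_le_inv_of_norm_lt_one {x : ℚ_[p]} (h : ‖x‖ < 1) : ‖x‖ ≤ (p : ℝ)⁻¹ := by
  simpa using (norm_le_pow_iff_norm_lt_pow_add_one x (-1)).mpr (by simpa using h)

theorem inv_pow_le_norm_natCast_add_two (hp : 3 ≤ p) (i : ℕ) :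
    (p : ℝ)⁻¹ ^ i ≤ ‖((i + 2 : ℕ) : ℚ_[p])‖ := by
  have hlt : i + 2 < p ^ (i + 1) := calc
    i + 2 < 3 ^ (i + 1) := by
      have h₂ := Nat.lt_pow_self (n := i + 1) (a := 2) (by norm_num)
      have h₃ : 2 ^ (i + 1) < 3 ^ (i + 1) := Nat.pow_lt_pow_left (by norm_num) (by omega)
      omega
    _ ≤ p ^ (i + 1) := Nat.pow_le_pow_left hp _
  have hndvd : ¬ (p ^ (i + 1) : ℤ) ∣ ((i + 2 : ℕ) : ℤ) := by
    exact_mod_cast Nat.not_dvd_of_pos_of_lt (by omega) hlt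
  rw [← norm_int_le_pow_iff_dvd, norm_le_pow_iff_norm_lt_pow_add_one, not_lt] at hndvd
  simpa [neg_add_eq_sub, ← zpow_natCast, ← zpow_neg, inv_zpow'] using hndvd

theorem norm_choose_mul_pow_le (hp : 3 ≤ p) (k i : ℕ) {x : ℚ_[p]} (hx : ‖x‖ ≤ (p : ℝ)⁻¹) :
    ‖(k.choose (i + 2) : ℚ_[p]) * x ^ (i + 1)‖ ≤ ‖(k : ℚ_[p])‖ * (p : ℝ)⁻¹ := by
  obtain _ | n := k
  · simp
  have hchoose : ((n + 1 : ℕ) : ℚ_[p]) * (n.choose (i + 1) : ℚ_[p]) =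
      ((n + 1).choose (i + 2) : ℚ_[p]) * ((i + 2 : ℕ) : ℚ_[p]) := by
    exact_mod_cast Nat.add_one_mul_choose_eq n (i + 1)
  have hC : ‖((n + 1).choose (i + 2) : ℚ_[p])‖ * ‖((i + 2 : ℕ) : ℚ_[p])‖ ≤
      ‖((n + 1 : ℕ) : ℚ_[p])‖ := by
    rw [← norm_mul, ← hchoose, norm_mul]
    exact mul_le_of_le_one_right (norm_nonneg _) (IsUltrametricDist.norm_natCast_le_one _ _)
  calc ‖((n + 1).choose (i + 2) : ℚ_[p]) * x ^ (i + 1)‖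
      = ‖((n + 1).choose (i + 2) : ℚ_[p])‖ * ‖x‖ ^ (i + 1) := by rw [norm_mul, norm_pow]
    _ ≤ ‖((n + 1).choose (i + 2) : ℚ_[p])‖ * ((p : ℝ)⁻¹ ^ i * (p : ℝ)⁻¹) := by
        rw [← pow_succ]
        gcongr
    _ ≤ ‖((n + 1).choose (i + 2) : ℚ_[p])‖ * ‖((i + 2 : ℕ) : ℚ_[p])‖ * (p : ℝ)⁻¹ := by
        rw [← mul_assoc]
        gcongr
        exact inv_pow_le_norm_natCast_add_two hp i
    _ ≤ ‖((n + 1 : ℕ) : ℚ_[p])‖ * (p : ℝ)⁻¹ := by gcongr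

theorem norm_geom_sum_sub_le (hp : 3 ≤ p) (k : ℕ) {u : ℚ_[p]} (hu : ‖u - 1‖ ≤ (p : ℝ)⁻¹) :
    ‖∑ m ∈ range k, u ^ m - k‖ ≤ ‖(k : ℚ_[p])‖ * (p : ℝ)⁻¹ := by
  obtain ⟨x, rfl⟩ : ∃ x, u = 1 + x := ⟨u - 1, by ring⟩
  rw [add_sub_cancel_left] at hu
  rw [geom_sum_one_add_eq_sum_choose]
  obtain _ | n := k
  · simp
  rw [sum_range_succ', zero_add, Nat.choose_one_right, pow_zero, mul_one, add_sub_cancel_right]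
  exact IsUltrametricDist.norm_sum_le_of_forall_le_of_nonneg (by positivity)
    fun i _ => norm_choose_mul_pow_le hp (n + 1) i hu

theorem norm_geom_sum₂_sub_le (hp : 3 ≤ p) (k : ℕ) {α β : ℚ_[p]} (hα : ‖α - 1‖ ≤ (p : ℝ)⁻¹)
    (hβ : ‖β - 1‖ ≤ (p : ℝ)⁻¹) :
    ‖∑ j ∈ range k, α ^ (k - 1 - j) * β ^ j - k‖ ≤ ‖(k : ℚ_[p])‖ * (p : ℝ)⁻¹ := by
  have hβ₁ : ‖β‖ = 1 := norm_eq_one_of_norm_sub_one_lt_one <|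
    hβ.trans_lt (inv_lt_one_of_one_lt₀ (Nat.one_lt_cast.mpr (Fact.out : p.Prime).one_lt))
  have hu : ‖α / β - 1‖ ≤ (p : ℝ)⁻¹ := (norm_div_sub_one_le hβ₁).trans (max_le hα hβ)
  have hdecomp : ∑ j ∈ range k, α ^ (k - 1 - j) * β ^ j - k =
      β ^ (k - 1) * (∑ m ∈ range k, (α / β) ^ m - k) + k * (β ^ (k - 1) - 1) := by
    have hhom := geom_sum₂_mul_eq_pow_mul_geom_sum (α / β) β k
    rw [div_mul_cancel₀ α (norm_ne_zero_iff.mp (by simp [hβ₁]))] at hhom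
    rw [hhom]
    ring
  rw [hdecomp]
  refine (IsUltrametricDist.norm_add_le_max _ _).trans (max_le ?_ ?_)
  · rw [norm_mul, norm_pow, hβ₁, one_pow, one_mul]
    exact norm_geom_sum_sub_le hp k hu
  · rw [norm_mul]
    gcongr
    exact (norm_pow_sub_one_le hβ₁.le _).trans hβ

end Padic

theorem stmt2 (p : ℕ) [Fact p.Prime] (hp : 3 ≤ p) (k : ℕ) (hk : 2 ≤ k)
    (α β : ℚ_[p]) (hα : ‖α - 1‖ < 1) (hβ : ‖β - 1‖ < 1) :
    ‖(∑ j ∈ Finset.range k, α ^ (k - 1 - j) * β ^ j) - (k : ℚ_[p])‖ < ‖(k : ℚ_[p])‖ ∧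
    ∃ γ : ℚ_[p], ‖γ - 1‖ < 1 ∧
      (∑ j ∈ Finset.range k, α ^ (k - 1 - j) * β ^ j) = (k : ℚ_[p]) * γ := by
  set S := ∑ j ∈ Finset.range k, α ^ (k - 1 - j) * β ^ j
  have hk0 : (k : ℚ_[p]) ≠ 0 := Nat.cast_ne_zero.mpr (by omega)
  have hkpos : 0 < ‖(k : ℚ_[p])‖ := norm_pos_iff.mpr hk0
  have hlt : ‖S - k‖ < ‖(k : ℚ_[p])‖ :=
    (Padic.norm_geom_sum₂_sub_le hp k (Padic.norm_le_inv_of_norm_lt_one hα)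
      (Padic.norm_le_inv_of_norm_lt_one hβ)).trans_lt
      (mul_lt_of_lt_one_right hkpos (inv_lt_one_of_one_lt₀ (by exact_mod_cast (by omega : 1 < p))))
  refine ⟨hlt, S / k, ?_, by field_simp⟩
  rwa [div_sub_one hk0, norm_div, div_lt_one hkpos]
end

section
/- Let p ≥ 3 be a prime, let q, k ≥ 1 be natural numbers and θ ∈ ℚ_p with |q|_p < |k|_p and |θ − 1|_p < |q|_p² < 1. Then for any two k-th roots of unity ξ, ξ′ ∈ ℚ_p, the ball B_r(x_ξ) is contained in the image f(B_r(x_{ξ′})): for every y ∈ B_r(x_ξ) there exists x ∈ B_r(x_{ξ′}) with f(x) = y. -/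
open scoped Classical

/-- The Potts–Bethe mapping on `ℚ_[p]` (with total division, so defined everywhere). -/
noncomputable def pottsBethe (p : ℕ) [Fact p.Prime] (q k : ℕ) (θ : ℚ_[p]) : ℚ_[p] → ℚ_[p] :=
  fun x => ((θ * x + (q : ℚ_[p]) - 1) / (x + θ + (q : ℚ_[p]) - 2)) ^ k

/-- The center `x_ξ` associated with a `k`-th root of unity `ξ`. -/
noncomputable def xiCenter (p : ℕ) [Fact p.Prime] (q k : ℕ) (θ ξ : ℚ_[p]) : ℚ_[p] :=
  if ξ = 1 then
    1 - (q : ℚ_[p]) + ((k : ℚ_[p]) - 1) *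
      (1 - (q : ℚ_[p]) / 2 + ((k : ℚ_[p]) - 2) * (q : ℚ_[p]) ^ 2 / (6 * (k : ℚ_[p]))) * (θ - 1)
  else
    2 - (q : ℚ_[p]) - θ + (q : ℚ_[p]) * (θ - 1) / (1 - ξ)

/-- The union `X` of the balls of radius `r = ‖q (θ - 1)‖` around the centers `x_ξ`. -/
def XSet (p : ℕ) [Fact p.Prime] (q k : ℕ) (θ : ℚ_[p]) : Set ℚ_[p] :=
  {x : ℚ_[p] | ∃ ξ : ℚ_[p], ξ ^ k = 1 ∧ ‖x - xiCenter p q k θ ξ‖ < ‖(q : ℚ_[p]) * (θ - 1)‖}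

/-!
`f` is `z ↦ z ^ k` composed with the Möbius map `M x = (θ x + q - 1) / (x + θ + q - 2)`. Because
`|θ - 1| < |q|²`, every center `x_ξ`, hence every `y ∈ B_r(x_ξ)`, lies within `|θ - 1|` of `1 - q`,
so `y = 1 + w` with `|w| = |q| < |k|`. Since `|k.choose j| ≤ |k| / |j|` and, for `p ≥ 3`, `|j|` is
at least `p ^ (2 - j)`, the binomial series of `(1 + t) ^ k` gives a contraction on the ball of
radius `|q| / |k|` whose fixed point satisfies `(1 + t) ^ k = y`. The preimage is
`x = M⁻¹ (ξ' (1 + t))`. If `ξ' ≠ 1` then `|1 - ξ'| = 1` and `x - x_ξ'` is `θ - 1` times a number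
of norm `< |q|`. If `ξ' = 1` the denominator `θ - 1 - t` only has norm `|q| / |k|`, and the
third-order expansion of `(1 + t) ^ k` is what shows that `x_1` approximates `x` to within
`|q (θ - 1)|`.
-/

open Finset IsUltrametricDist

section Ultrametric

variable {R : Type*}

lemma norm_sub_le_max [SeminormedAddCommGroup R] [IsUltrametricDist R] (a b : R) :
    ‖a - b‖ ≤ max ‖a‖ ‖b‖ := by
  simpa [sub_eq_add_neg] using norm_add_le_max a (-b)

lemma norm_add_lt_of_lt [SeminormedAddCommGroup R] [IsUltrametricDist R] {a b : R} {r : ℝ}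
    (ha : ‖a‖ < r) (hb : ‖b‖ < r) : ‖a + b‖ < r :=
  (norm_add_le_max a b).trans_lt (max_lt ha hb)

lemma norm_sub_lt_of_lt [SeminormedAddCommGroup R] [IsUltrametricDist R] {a b : R} {r : ℝ}
    (ha : ‖a‖ < r) (hb : ‖b‖ < r) : ‖a - b‖ < r :=
  (norm_sub_le_max a b).trans_lt (max_lt ha hb)

lemma norm_pow_sub_pow_le [NormedField R] [IsUltrametricDist R] {s t : R} {ρ : ℝ}
    (hs : ‖s‖ ≤ ρ) (ht : ‖t‖ ≤ ρ) (n : ℕ) : ‖s ^ n - t ^ n‖ ≤ ρ ^ (n - 1) * ‖s - t‖ := by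
  have hρ : 0 ≤ ρ := (norm_nonneg s).trans hs
  rw [← Commute.geom_sum₂_mul (Commute.all s t), norm_mul]
  gcongr
  refine norm_sum_le_of_forall_le_of_nonneg (by positivity) fun i hi => ?_
  have hi : i ≤ n - 1 := Nat.le_sub_one_of_lt (mem_range.1 hi)
  calc ‖s ^ i * t ^ (n - 1 - i)‖ = ‖s‖ ^ i * ‖t‖ ^ (n - 1 - i) := by rw [norm_mul, norm_pow, norm_pow]
    _ ≤ ρ ^ i * ρ ^ (n - 1 - i) := by gcongr
    _ = ρ ^ (n - 1) := by rw [← pow_add, Nat.add_sub_cancel' hi]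

end Ultrametric

lemma norm_eq_one_of_pow_eq_one {R : Type*} [NormedDivisionRing R] {ζ : R} {k : ℕ} (hk : k ≠ 0)
    (hζ : ζ ^ k = 1) : ‖ζ‖ = 1 :=
  (pow_left_inj₀ (norm_nonneg ζ) zero_le_one hk).1 (by rw [← norm_pow, hζ, norm_one, one_pow])

namespace Padic

variable {p : ℕ} [Fact p.Prime]

lemma inv_pow_log_le_norm_natCast {n : ℕ} (hn : n ≠ 0) :
    (p : ℝ)⁻¹ ^ Nat.log p n ≤ ‖(n : ℚ_[p])‖ := by
  have hp : (1 : ℝ) ≤ p := mod_cast (Fact.out : p.Prime).one_le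
  rw [norm_eq_zpow_neg_valuation (Nat.cast_ne_zero.2 hn), valuation_natCast, zpow_neg,
    zpow_natCast, ← inv_pow]
  exact pow_le_pow_of_le_one (by positivity) (inv_le_one_of_one_le₀ hp) (padicValNat_le_nat_log n)

lemma norm_le_inv_mul_of_norm_lt {a b : ℚ_[p]} (h : ‖a‖ < ‖b‖) : ‖a‖ ≤ (p : ℝ)⁻¹ * ‖b‖ := by
  have hp : (1 : ℝ) < p := mod_cast (Fact.out : p.Prime).one_lt
  rw [le_inv_mul_iff₀ (by positivity)]
  rcases eq_or_ne a 0 with rfl | ha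
  · simp
  have hb : b ≠ 0 := norm_pos_iff.1 ((norm_nonneg a).trans_lt h)
  rw [norm_eq_zpow_neg_valuation ha, norm_eq_zpow_neg_valuation hb] at h ⊢
  have hv : -a.valuation + 1 ≤ -b.valuation := (zpow_lt_zpow_iff_right₀ hp).1 h
  calc (p : ℝ) * (p : ℝ) ^ (-a.valuation) = (p : ℝ) ^ (-a.valuation + 1) := by
        rw [zpow_add_one₀ (by positivity), mul_comm]
    _ ≤ (p : ℝ) ^ (-b.valuation) := zpow_le_zpow_right₀ hp.le hv

lemma norm_two_of_three_le (hp : 3 ≤ p) : ‖(2 : ℚ_[p])‖ = 1 := by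
  have h : ‖((2 : ℕ) : ℚ_[p])‖ = 1 := by
    rw [norm_natCast_eq_one_iff, Nat.coprime_two_right]
    exact (Fact.out : p.Prime).odd_of_ne_two (by omega)
  exact_mod_cast h

lemma inv_le_norm_six_of_three_le (hp : 3 ≤ p) : (p : ℝ)⁻¹ ≤ ‖(6 : ℚ_[p])‖ := by
  have hlog : Nat.log p 6 ≤ 1 := Nat.le_of_lt_succ <| Nat.log_lt_of_lt_pow (by norm_num) (by nlinarith)
  have hp1 : (p : ℝ)⁻¹ ≤ 1 := inv_le_one_of_one_le₀ (by exact_mod_cast (by omega : 1 ≤ p))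
  calc (p : ℝ)⁻¹ = (p : ℝ)⁻¹ ^ 1 := (pow_one _).symm
    _ ≤ (p : ℝ)⁻¹ ^ Nat.log p 6 := pow_le_pow_of_le_one (by positivity) hp1 hlog
    _ ≤ ‖(6 : ℚ_[p])‖ := mod_cast inv_pow_log_le_norm_natCast (p := p) (n := 6) (by norm_num)

lemma norm_natCast_sub_natCast_le_one (k n : ℕ) : ‖(k : ℚ_[p]) - n‖ ≤ 1 := by
  exact_mod_cast norm_int_le_one ((k : ℤ) - n)

end Padic

lemma Nat.lt_pow_sub_of_two_mul_le {p b j : ℕ} (hp : 3 ≤ p) (h : 2 * b ≤ j) : j < p ^ (j - b) :=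
  calc j ≤ 2 * (j - b) := by omega
    _ < 1 + 2 * (j - b) := by omega
    _ ≤ 3 ^ (j - b) := by
        have := one_add_mul_le_pow (a := (2 : ℤ)) (by norm_num) (j - b)
        norm_num at this
        exact_mod_cast (by linarith : (1 : ℤ) + 2 * (j - b : ℕ) ≤ 3 ^ (j - b))
    _ ≤ p ^ (j - b) := Nat.pow_le_pow_left hp _

lemma Nat.cast_choose_three {R : Type*} [CommRing R] (k : ℕ) :
    6 * (k.choose 3 : R) = k * (k - 1) * (k - 2) := by
  obtain _ | _ | n := k
  · simp
  · simp [Nat.choose_eq_zero_of_lt]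
  have h := Nat.cast_descFactorial (S := R) (n + 2) 3
  rw [Nat.descFactorial_eq_factorial_mul_choose] at h
  simp [ascPochhammer_succ_eval, Nat.factorial] at h
  rw [h]; push_cast; ring

section BinomialTail

variable {p : ℕ} [Fact p.Prime]

noncomputable def binomialTail (k a : ℕ) (t : ℚ_[p]) : ℚ_[p] :=
  ∑ j ∈ Icc a k, (k.choose j : ℚ_[p]) * t ^ j

lemma binomialTail_eq_add (k a : ℕ) (t : ℚ_[p]) :
    binomialTail k a t = k.choose a * t ^ a + binomialTail k (a + 1) t := by
  rw [binomialTail, binomialTail, Icc_add_one_left_eq_Ioc]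
  rcases le_or_gt a k with h | h
  · rw [← add_sum_Ioc_eq_sum_Icc h]
  · simp [Nat.choose_eq_zero_of_lt h, Icc_eq_empty_of_lt h, Ioc_eq_empty_of_le h.le]

lemma one_add_pow_eq (k : ℕ) (t : ℚ_[p]) : (1 + t) ^ k = 1 + k * t + binomialTail k 2 t := by
  have h : (1 + t) ^ k = binomialTail k 0 t := by
    simp only [binomialTail, add_comm (1 : ℚ_[p]), add_pow, one_pow, mul_one,
      ← Nat.range_succ_eq_Icc_zero, mul_comm]
  rw [h, binomialTail_eq_add, binomialTail_eq_add k 1]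
  simp [add_assoc]

lemma binomialTail_two_eq (k : ℕ) (t : ℚ_[p]) :
    binomialTail k 2 t = k.choose 2 * t ^ 2 + k.choose 3 * t ^ 3 + binomialTail k 4 t := by
  rw [binomialTail_eq_add, binomialTail_eq_add k 3, add_assoc]

lemma binomialTail_zero {k a : ℕ} (ha : 0 < a) : binomialTail k a (0 : ℚ_[p]) = 0 :=
  sum_eq_zero fun j hj => by simp [(ha.trans_le (mem_Icc.1 hj).1).ne']

lemma norm_choose_mul_norm_le (k j : ℕ) :
    ‖(k.choose j : ℚ_[p])‖ * ‖(j : ℚ_[p])‖ ≤ ‖(k : ℚ_[p])‖ := by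
  rcases j with _ | i
  · simp
  rcases k with _ | n
  · simp
  have h : ((n + 1 : ℕ) : ℚ_[p]) * n.choose i = (n + 1).choose (i + 1) * (i + 1 : ℕ) :=
    mod_cast Nat.add_one_mul_choose_eq n i
  rw [← norm_mul, ← h, norm_mul]
  exact mul_le_of_le_one_right (norm_nonneg _) (norm_natCast_le_one _ _)

lemma norm_binomialTail_sub_le (hp : 3 ≤ p) {k a b : ℕ} (ha : 0 < a) (hab : 2 * b ≤ a)
    {s t : ℚ_[p]} {ρ : ℝ} (hs : ‖s‖ ≤ ρ) (ht : ‖t‖ ≤ ρ) (hρ : ρ ≤ (p : ℝ)⁻¹) :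
    ‖binomialTail k a s - binomialTail k a t‖ ≤ ‖(k : ℚ_[p])‖ * ρ ^ b * ‖s - t‖ := by
  have hρ0 : 0 ≤ ρ := (norm_nonneg s).trans hs
  have hρ1 : ρ ≤ 1 := hρ.trans (inv_le_one_of_one_le₀ (by exact_mod_cast (by omega : 1 ≤ p)))
  rw [binomialTail, binomialTail, ← sum_sub_distrib]
  refine norm_sum_le_of_forall_le_of_nonneg (by positivity) fun j hj => ?_
  obtain ⟨haj, -⟩ := mem_Icc.1 hj
  -- `|k.choose j| ≤ |k| / |j| ≤ |k| p ^ log_p j`, and `ρ ^ (j - 1 - b) ≤ p⁻¹ ^ log_p j`.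
  set L := Nat.log p j
  have hL : L + b ≤ j - 1 := by
    have := Nat.log_lt_of_lt_pow (by omega) (Nat.lt_pow_sub_of_two_mul_le hp (hab.trans haj))
    omega
  have hchoose : ‖(k.choose j : ℚ_[p])‖ * (p : ℝ)⁻¹ ^ L ≤ ‖(k : ℚ_[p])‖ :=
    (mul_le_mul_of_nonneg_left (Padic.inv_pow_log_le_norm_natCast (by omega))
      (norm_nonneg _)).trans (norm_choose_mul_norm_le k j)
  have hρpow : ρ ^ (j - 1) ≤ (p : ℝ)⁻¹ ^ L * ρ ^ b :=
    calc ρ ^ (j - 1) ≤ ρ ^ (L + b) := pow_le_pow_of_le_one hρ0 hρ1 hL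
      _ = ρ ^ L * ρ ^ b := pow_add _ _ _
      _ ≤ (p : ℝ)⁻¹ ^ L * ρ ^ b := by gcongr
  calc ‖(k.choose j : ℚ_[p]) * s ^ j - (k.choose j : ℚ_[p]) * t ^ j‖
      = ‖(k.choose j : ℚ_[p])‖ * ‖s ^ j - t ^ j‖ := by rw [← mul_sub, norm_mul]
    _ ≤ ‖(k.choose j : ℚ_[p])‖ * (ρ ^ (j - 1) * ‖s - t‖) := by
        gcongr; exact norm_pow_sub_pow_le hs ht j
    _ ≤ ‖(k.choose j : ℚ_[p])‖ * ((p : ℝ)⁻¹ ^ L * ρ ^ b * ‖s - t‖) := by gcongr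
    _ = ‖(k.choose j : ℚ_[p])‖ * (p : ℝ)⁻¹ ^ L * (ρ ^ b * ‖s - t‖) := by ring
    _ ≤ ‖(k : ℚ_[p])‖ * (ρ ^ b * ‖s - t‖) := by gcongr
    _ = ‖(k : ℚ_[p])‖ * ρ ^ b * ‖s - t‖ := by ring

lemma norm_binomialTail_le (hp : 3 ≤ p) {k a b : ℕ} (ha : 0 < a) (hab : 2 * b ≤ a)
    {t : ℚ_[p]} {ρ : ℝ} (ht : ‖t‖ ≤ ρ) (hρ : ρ ≤ (p : ℝ)⁻¹) :
    ‖binomialTail k a t‖ ≤ ‖(k : ℚ_[p])‖ * ρ ^ b * ‖t‖ := by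
  simpa [binomialTail_zero ha] using
    norm_binomialTail_sub_le (k := k) hp ha hab ht ((norm_zero (E := ℚ_[p])).trans_le
      ((norm_nonneg t).trans ht)) hρ

end BinomialTail

section Roots

variable {p : ℕ} [Fact p.Prime]

lemma exists_one_add_pow_eq (hp : 3 ≤ p) {k : ℕ} {w : ℚ_[p]} (hw : ‖w‖ < ‖(k : ℚ_[p])‖) :
    ∃ t : ℚ_[p], (1 + t) ^ k = 1 + w ∧ ‖t‖ ≤ ‖w‖ / ‖(k : ℚ_[p])‖ := by
  set K : ℚ_[p] := (k : ℚ_[p])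
  have hK : 0 < ‖K‖ := (norm_nonneg w).trans_lt hw
  set ρ := ‖w‖ / ‖K‖
  have hwρ : ‖K‖ * ρ = ‖w‖ := mul_div_cancel₀ _ hK.ne'
  have hρ0 : 0 ≤ ρ := by positivity
  have hρp : ρ ≤ (p : ℝ)⁻¹ := by
    rw [div_le_iff₀ hK]
    exact Padic.norm_le_inv_mul_of_norm_lt hw
  have hρ1 : ρ < 1 := (div_lt_one hK).2 hw
  -- `(1 + t)^k = 1 + w` is the fixed-point equation of `Φ`, a `ρ`-contraction of the `ρ`-ball.
  set Φ : ℚ_[p] → ℚ_[p] := fun t => (w - binomialTail k 2 t) / K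
  set s := Metric.closedBall (0 : ℚ_[p]) ρ
  have hmaps : Set.MapsTo Φ s s := fun t ht => by
    rw [mem_closedBall_zero_iff] at ht ⊢
    have htail : ‖binomialTail k 2 t‖ ≤ ‖w‖ :=
      calc ‖binomialTail k 2 t‖ ≤ ‖K‖ * ρ ^ 1 * ‖t‖ := norm_binomialTail_le hp two_pos le_rfl ht hρp
        _ ≤ ‖K‖ * ρ * 1 := by gcongr; exacts [(pow_one ρ).le, ht.trans hρ1.le]
        _ = ‖w‖ := by rw [mul_one, hwρ]
    rw [norm_div, div_le_div_iff_of_pos_right hK]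
    exact (norm_sub_le_max _ _).trans (max_le le_rfl htail)
  have hcontr : ContractingWith ⟨ρ, hρ0⟩ (hmaps.restrict Φ s s) := by
    refine ⟨mod_cast hρ1, LipschitzWith.of_dist_le_mul fun ⟨a, ha⟩ ⟨b, hb⟩ => ?_⟩
    rw [mem_closedBall_zero_iff] at ha hb
    change dist (Φ a) (Φ b) ≤ ρ * dist a b
    rw [dist_eq_norm, dist_eq_norm, ← sub_div, norm_div, div_le_iff₀ hK, sub_sub_sub_cancel_left,
      norm_sub_rev a b]
    calc ‖binomialTail k 2 b - binomialTail k 2 a‖ ≤ ‖K‖ * ρ ^ 1 * ‖b - a‖ :=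
          norm_binomialTail_sub_le hp two_pos le_rfl hb ha hρp
      _ = ρ * ‖b - a‖ * ‖K‖ := by ring
  obtain ⟨t, hts, hfix, -⟩ := hcontr.exists_fixedPoint' Metric.isClosed_closedBall.isComplete hmaps
    (Metric.mem_closedBall_self hρ0) (edist_ne_top _ _)
  refine ⟨t, ?_, mem_closedBall_zero_iff.1 hts⟩
  have hKt : K * t = w - binomialTail k 2 t := by
    conv_lhs => rw [← (hfix : Φ t = t)]
    exact mul_div_cancel₀ _ (norm_pos_iff.1 hK)
  rw [one_add_pow_eq, hKt]
  ring

lemma eq_one_of_pow_eq_one_of_norm_sub_one_lt (hp : 3 ≤ p) {k : ℕ} (hk : k ≠ 0) {ζ : ℚ_[p]}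
    (hζ : ζ ^ k = 1) (h : ‖ζ - 1‖ < 1) : ζ = 1 := by
  set s := ζ - 1
  by_contra hne
  have hs : 0 < ‖s‖ := norm_pos_iff.2 (sub_ne_zero.2 hne)
  have hK : 0 < ‖(k : ℚ_[p])‖ := norm_pos_iff.2 (Nat.cast_ne_zero.2 hk)
  have hsp : ‖s‖ ≤ (p : ℝ)⁻¹ := by
    simpa using Padic.norm_le_inv_mul_of_norm_lt (h.trans_eq norm_one.symm)
  have hks : (k : ℚ_[p]) * s = -binomialTail k 2 s := by
    have := one_add_pow_eq k s
    rw [add_sub_cancel, hζ] at this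
    linear_combination -this
  have hle : ‖(k : ℚ_[p])‖ * ‖s‖ ≤ ‖(k : ℚ_[p])‖ * ‖s‖ * ‖s‖ := by
    calc ‖(k : ℚ_[p])‖ * ‖s‖ = ‖binomialTail k 2 s‖ := by rw [← norm_mul, hks, norm_neg]
      _ ≤ ‖(k : ℚ_[p])‖ * ‖s‖ ^ 1 * ‖s‖ := norm_binomialTail_le hp two_pos le_rfl le_rfl hsp
      _ = ‖(k : ℚ_[p])‖ * ‖s‖ * ‖s‖ := by rw [pow_one]
  exact (le_mul_iff_one_le_right (by positivity)).1 hle |>.not_gt h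

lemma norm_one_sub_eq_one_of_pow_eq_one (hp : 3 ≤ p) {k : ℕ} (hk : k ≠ 0) {ζ : ℚ_[p]}
    (hζ : ζ ^ k = 1) (hne : ζ ≠ 1) : ‖1 - ζ‖ = 1 := by
  refine le_antisymm ?_ (not_lt.1 fun h => hne ?_)
  · simpa [norm_eq_one_of_pow_eq_one hk hζ] using norm_sub_le_max (1 : ℚ_[p]) ζ
  · exact eq_one_of_pow_eq_one_of_norm_sub_one_lt hp hk hζ (by rwa [norm_sub_rev])

end Roots

section PottsBethe

variable {p : ℕ} [Fact p.Prime] {q k : ℕ} {θ : ℚ_[p]}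

/-- The inverse of the Möbius map `x ↦ (θ x + q - 1) / (x + θ + q - 2)`, whose determinant is
`(θ - 1) (θ + q - 1)`. -/
noncomputable def mobiusInv (q : ℕ) (θ ζ : ℚ_[p]) : ℚ_[p] :=
  2 - q - θ + (θ - 1) * (θ + q - 1) / (θ - ζ)

lemma pottsBethe_mobiusInv (hθ : θ ≠ 1) (hθq : θ + q - 1 ≠ 0) {ζ : ℚ_[p]} (hζ : θ ≠ ζ) :
    pottsBethe p q k θ (mobiusInv q θ ζ) = ζ ^ k := by
  have hden : mobiusInv q θ ζ + θ + q - 2 = (θ - 1) * (θ + q - 1) / (θ - ζ) := by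
    rw [mobiusInv]; ring
  have hnum : θ * mobiusInv q θ ζ + q - 1 = ζ * ((θ - 1) * (θ + q - 1) / (θ - ζ)) := by
    rw [mobiusInv]
    field_simp [sub_ne_zero.2 hζ]
    ring
  rw [pottsBethe, hden, hnum, mul_div_cancel_right₀ _ (div_ne_zero (mul_ne_zero
    (sub_ne_zero.2 hθ) hθq) (sub_ne_zero.2 hζ))]

noncomputable def centerCoeff (p : ℕ) [Fact p.Prime] (q k : ℕ) : ℚ_[p] :=
  (k - 1) * (1 - q / 2 + (k - 2) * q ^ 2 / (6 * k))

lemma xiCenter_one : xiCenter p q k θ 1 = 1 - q + centerCoeff p q k * (θ - 1) := by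
  simp [xiCenter, centerCoeff, mul_assoc]

lemma xiCenter_of_ne_one {ξ : ℚ_[p]} (hξ : ξ ≠ 1) :
    xiCenter p q k θ ξ = 2 - q - θ + q * (θ - 1) / (1 - ξ) := by
  simp [xiCenter, hξ]

lemma norm_centerCoeff_le_one (hp : 3 ≤ p) (hqk : ‖(q : ℚ_[p])‖ < ‖(k : ℚ_[p])‖) :
    ‖centerCoeff p q k‖ ≤ 1 := by
  have hK : 0 < ‖(k : ℚ_[p])‖ := (norm_nonneg _).trans_lt hqk
  have h6 : 0 < ‖(6 : ℚ_[p])‖ := norm_pos_iff.2 (by norm_num)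
  have hq1 : ‖(q : ℚ_[p])‖ ≤ 1 := norm_natCast_le_one _ q
  have hquad : ‖((k : ℚ_[p]) - 2) * q ^ 2 / (6 * k)‖ ≤ 1 := by
    rw [norm_div, norm_mul, norm_mul, norm_pow, div_le_one (by positivity)]
    calc ‖(k : ℚ_[p]) - 2‖ * ‖(q : ℚ_[p])‖ ^ 2 ≤ 1 * (1 * ‖(q : ℚ_[p])‖) := by
          rw [sq]; gcongr; exact_mod_cast Padic.norm_natCast_sub_natCast_le_one k 2
      _ ≤ (p : ℝ)⁻¹ * ‖(k : ℚ_[p])‖ := by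
          rw [one_mul, one_mul]; exact Padic.norm_le_inv_mul_of_norm_lt hqk
      _ ≤ ‖(6 : ℚ_[p])‖ * ‖(k : ℚ_[p])‖ := by
          gcongr; exact Padic.inv_le_norm_six_of_three_le hp
  have hhalf : ‖(q : ℚ_[p]) / 2‖ ≤ 1 := by
    rwa [norm_div, Padic.norm_two_of_three_le hp, div_one]
  have hk1 : ‖(k : ℚ_[p]) - 1‖ ≤ 1 := by exact_mod_cast Padic.norm_natCast_sub_natCast_le_one k 1
  rw [centerCoeff, norm_mul]
  refine mul_le_one₀ hk1 (norm_nonneg _) ?_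
  refine (norm_add_le_max _ _).trans (max_le ?_ hquad)
  exact (norm_sub_le_max _ _).trans (max_le norm_one.le hhalf)

lemma norm_xiCenter_sub_le (hp : 3 ≤ p) (hqk : ‖(q : ℚ_[p])‖ < ‖(k : ℚ_[p])‖) {ξ : ℚ_[p]}
    (hξ : ξ ^ k = 1) : ‖xiCenter p q k θ ξ - (1 - q)‖ ≤ ‖θ - 1‖ := by
  have hk : k ≠ 0 := by rintro rfl; exact (norm_nonneg _).not_gt (by simpa using hqk)
  by_cases hξ1 : ξ = 1
  · rw [hξ1, xiCenter_one, add_sub_cancel_left, norm_mul]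
    exact mul_le_of_le_one_left (norm_nonneg _) (norm_centerCoeff_le_one hp hqk)
  · have h : xiCenter p q k θ ξ - (1 - q) = -(θ - 1) + q * (θ - 1) / (1 - ξ) := by
      rw [xiCenter_of_ne_one hξ1]; ring
    rw [h]
    refine (norm_add_le_max _ _).trans (max_le (norm_neg _).le ?_)
    rw [norm_div, norm_one_sub_eq_one_of_pow_eq_one hp hk hξ hξ1, div_one, norm_mul]
    exact mul_le_of_le_one_left (norm_nonneg _) (norm_natCast_le_one _ q)

-- Expanding `(1 + t) ^ k` to third order: each of the four terms on the right is small.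
lemma six_mul_add_mul_one_add_centerCoeff (hk : (k : ℚ_[p]) ≠ 0) (t : ℚ_[p]) :
    6 * k * (q + t * (1 + centerCoeff p q k)) = 6 * k * ((1 + t) ^ k - (1 - q))
      - 6 * k * binomialTail k 4 t - 3 * k * (k - 1) * t * (k * t + q)
      + (k - 1) * (k - 2) * t * ((q - k * t) * (q + k * t)) := by
  have hcoef : 6 * k * (1 + centerCoeff p q k)
      = 6 * k + (k - 1) * (6 * k - 3 * k * q + (k - 2) * (q : ℚ_[p]) ^ 2) := by
    rw [centerCoeff]; field_simp; ring
  have hexp : (1 + t) ^ k = 1 + k * t + k.choose 2 * t ^ 2 + k.choose 3 * t ^ 3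
      + binomialTail k 4 t := by
    rw [one_add_pow_eq, binomialTail_two_eq]; ring
  have hC2 : 2 * (k.choose 2 : ℚ_[p]) = k * (k - 1) := by
    rw [Nat.cast_choose_two]; ring
  linear_combination t * hcoef - 6 * k * hexp - 3 * k * t ^ 2 * hC2
    - k * t ^ 3 * Nat.cast_choose_three (R := ℚ_[p]) k

section Estimates

variable {ρ : ℝ} {t : ℚ_[p]}

lemma norm_natCast_mul_add_natCast_le (hp : 3 ≤ p) (hρp : ρ ≤ (p : ℝ)⁻¹)
    (hqρ : ‖(q : ℚ_[p])‖ = ‖(k : ℚ_[p])‖ * ρ) (ht : ‖t‖ ≤ ρ)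
    (hw : ‖(1 + t) ^ k - (1 - q)‖ ≤ ‖(q : ℚ_[p])‖ * ρ) :
    ‖(k : ℚ_[p]) * t + q‖ ≤ ‖(q : ℚ_[p])‖ * ρ := by
  have h : (k : ℚ_[p]) * t + q = ((1 + t) ^ k - (1 - q)) - binomialTail k 2 t := by
    rw [one_add_pow_eq]; ring
  have hρ0 : 0 ≤ ρ := (norm_nonneg t).trans ht
  rw [h]
  refine (norm_sub_le_max _ _).trans (max_le hw ?_)
  calc ‖binomialTail k 2 t‖ ≤ ‖(k : ℚ_[p])‖ * ρ ^ 1 * ‖t‖ :=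
        norm_binomialTail_le hp two_pos le_rfl ht hρp
    _ ≤ ‖(k : ℚ_[p])‖ * ρ * ρ := by rw [pow_one]; gcongr
    _ = ‖(q : ℚ_[p])‖ * ρ := by rw [hqρ]

lemma norm_eq_of_one_add_pow_near (hp : 3 ≤ p) (hρp : ρ ≤ (p : ℝ)⁻¹)
    (hqρ : ‖(q : ℚ_[p])‖ = ‖(k : ℚ_[p])‖ * ρ) (ht : ‖t‖ ≤ ρ)
    (hw : ‖(1 + t) ^ k - (1 - q)‖ ≤ ‖(q : ℚ_[p])‖ * ρ) (hq : 0 < ‖(q : ℚ_[p])‖) : ‖t‖ = ρ := by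
  have hρ1 : ρ < 1 := hρp.trans_lt (inv_lt_one_of_one_lt₀ (by exact_mod_cast (by omega : 1 < p)))
  have hK : 0 < ‖(k : ℚ_[p])‖ := pos_of_mul_pos_left (hqρ ▸ hq) ((norm_nonneg t).trans ht)
  have h : ‖(k : ℚ_[p]) * t - -q‖ < ‖-(q : ℚ_[p])‖ := by
    rw [sub_neg_eq_add, norm_neg]
    exact (norm_natCast_mul_add_natCast_le hp hρp hqρ ht hw).trans_lt
      (mul_lt_of_lt_one_right hq hρ1)
  have := Padic.norm_eq_of_norm_sub_lt_right h
  rw [norm_neg, norm_mul, hqρ] at this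
  exact mul_left_cancel₀ hK.ne' this

lemma norm_quadratic_remainder_lt (hp : 3 ≤ p) (hρp : ρ ≤ (p : ℝ)⁻¹)
    (ht : ‖t‖ ≤ ρ) (hkt : ‖(k : ℚ_[p]) * t + q‖ ≤ ‖(q : ℚ_[p])‖ * ρ)
    (hK : 0 < ‖(k : ℚ_[p])‖) (hQρ : 0 < ‖(q : ℚ_[p])‖ * ρ) :
    ‖3 * k * (k - 1) * t * (k * t + q)‖ < ‖6 * (k : ℚ_[p])‖ * (‖(q : ℚ_[p])‖ * ρ) := by
  have hK1 : ‖(k : ℚ_[p]) - 1‖ ≤ 1 := by exact_mod_cast Padic.norm_natCast_sub_natCast_le_one k 1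
  have hρ0 : 0 ≤ ρ := (norm_nonneg t).trans ht
  have hρ1 : ρ < 1 := hρp.trans_lt (inv_lt_one_of_one_lt₀ (by exact_mod_cast (by omega : 1 < p)))
  have h6 : 0 < ‖(6 : ℚ_[p])‖ := norm_pos_iff.2 (by norm_num)
  have h36 : ‖(3 : ℚ_[p])‖ = ‖(6 : ℚ_[p])‖ := by
    rw [show (6 : ℚ_[p]) = 2 * 3 by norm_num, norm_mul, Padic.norm_two_of_three_le hp, one_mul]
  set K : ℚ_[p] := (k : ℚ_[p])
  set Q : ℚ_[p] := (q : ℚ_[p])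
  simp only [norm_mul]
  calc ‖(3 : ℚ_[p])‖ * ‖K‖ * ‖K - 1‖ * ‖t‖ * ‖K * t + Q‖
      ≤ ‖(6 : ℚ_[p])‖ * ‖K‖ * 1 * ρ * (‖Q‖ * ρ) := by rw [h36]; gcongr
    _ < ‖(6 : ℚ_[p])‖ * ‖K‖ * 1 * 1 * (‖Q‖ * ρ) := by gcongr
    _ = ‖(6 : ℚ_[p])‖ * ‖K‖ * (‖Q‖ * ρ) := by ring

lemma norm_cubic_remainder_lt (hp : 3 ≤ p) (hρp : ρ ≤ (p : ℝ)⁻¹)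
    (hqρ : ‖(q : ℚ_[p])‖ = ‖(k : ℚ_[p])‖ * ρ) (ht : ‖t‖ ≤ ρ)
    (hkt : ‖(k : ℚ_[p]) * t + q‖ ≤ ‖(q : ℚ_[p])‖ * ρ)
    (hK : 0 < ‖(k : ℚ_[p])‖) (hQρ : 0 < ‖(q : ℚ_[p])‖ * ρ) :
    ‖(k - 1) * (k - 2) * t * ((q - k * t) * (q + k * t))‖
      < ‖6 * (k : ℚ_[p])‖ * (‖(q : ℚ_[p])‖ * ρ) := by
  have hK1 : ‖(k : ℚ_[p]) - 1‖ ≤ 1 := by exact_mod_cast Padic.norm_natCast_sub_natCast_le_one k 1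
  have hK2 : ‖(k : ℚ_[p]) - 2‖ ≤ 1 := by exact_mod_cast Padic.norm_natCast_sub_natCast_le_one k 2
  set K : ℚ_[p] := (k : ℚ_[p])
  set Q : ℚ_[p] := (q : ℚ_[p])
  have hρ : 0 < ρ := pos_of_mul_pos_right hQρ (norm_nonneg _)
  have hρ1 : ρ < 1 := hρp.trans_lt (inv_lt_one_of_one_lt₀ (by exact_mod_cast (by omega : 1 < p)))
  have hρ6 : ρ * ρ < ‖(6 : ℚ_[p])‖ :=
    calc ρ * ρ < 1 * ρ := by gcongr
      _ ≤ ‖(6 : ℚ_[p])‖ := by rw [one_mul]; exact hρp.trans (Padic.inv_le_norm_six_of_three_le hp)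
  have hQKt : ‖Q - K * t‖ ≤ ‖Q‖ := by
    refine (norm_sub_le_max _ _).trans (max_le le_rfl ?_)
    rw [norm_mul, hqρ]; gcongr
  rw [add_comm Q]
  simp only [norm_mul]
  calc ‖K - 1‖ * ‖K - 2‖ * ‖t‖ * (‖Q - K * t‖ * ‖K * t + Q‖)
      ≤ 1 * 1 * ρ * (‖Q‖ * (‖Q‖ * ρ)) := by gcongr
    _ = ρ * ρ * ‖K‖ * (‖Q‖ * ρ) := by simp only [hqρ]; ring
    _ < ‖(6 : ℚ_[p])‖ * ‖K‖ * (‖Q‖ * ρ) := by gcongr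

lemma norm_add_mul_one_add_centerCoeff_lt (hp : 3 ≤ p) (hρp : ρ ≤ (p : ℝ)⁻¹)
    (hqρ : ‖(q : ℚ_[p])‖ = ‖(k : ℚ_[p])‖ * ρ) (ht : ‖t‖ ≤ ρ)
    (hw : ‖(1 + t) ^ k - (1 - q)‖ < ‖(q : ℚ_[p])‖ * ρ) :
    ‖(q : ℚ_[p]) + t * (1 + centerCoeff p q k)‖ < ‖(q : ℚ_[p])‖ * ρ := by
  have hkt := norm_natCast_mul_add_natCast_le hp hρp hqρ ht hw.le
  have hQρ : 0 < ‖(q : ℚ_[p])‖ * ρ := (norm_nonneg _).trans_lt hw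
  have hQ : 0 < ‖(q : ℚ_[p])‖ := pos_of_mul_pos_left hQρ ((norm_nonneg t).trans ht)
  have hρ : 0 < ρ := pos_of_mul_pos_right hQρ (norm_nonneg _)
  have hK : 0 < ‖(k : ℚ_[p])‖ := (pos_iff_pos_of_mul_pos (hqρ ▸ hQ)).2 hρ
  have h6K : 0 < ‖6 * (k : ℚ_[p])‖ := norm_pos_iff.2 (mul_ne_zero (by norm_num) (norm_pos_iff.1 hK))
  have hT4 : ‖binomialTail k 4 t‖ < ‖(q : ℚ_[p])‖ * ρ :=
    calc ‖binomialTail k 4 t‖ ≤ ‖(k : ℚ_[p])‖ * ρ ^ 2 * ρ :=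
          (norm_binomialTail_le hp four_pos le_rfl ht hρp).trans (by gcongr)
      _ = ‖(q : ℚ_[p])‖ * ρ * ρ := by rw [hqρ]; ring
      _ < ‖(q : ℚ_[p])‖ * ρ := mul_lt_of_lt_one_right hQρ (hρp.trans_lt
          (inv_lt_one_of_one_lt₀ (by exact_mod_cast (by omega : 1 < p))))
  have hsum : ‖6 * (k : ℚ_[p]) * (q + t * (1 + centerCoeff p q k))‖
      < ‖6 * (k : ℚ_[p])‖ * (‖(q : ℚ_[p])‖ * ρ) := by
    rw [six_mul_add_mul_one_add_centerCoeff (norm_pos_iff.1 hK)]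
    refine norm_add_lt_of_lt (norm_sub_lt_of_lt (norm_sub_lt_of_lt ?_ ?_)
      (norm_quadratic_remainder_lt hp hρp ht hkt hK hQρ))
      (norm_cubic_remainder_lt hp hρp hqρ ht hkt hK hQρ)
    · rw [norm_mul]; gcongr
    · rw [norm_mul]; gcongr
  rw [norm_mul (6 * (k : ℚ_[p]))] at hsum
  exact lt_of_mul_lt_mul_left hsum h6K.le

end Estimates

lemma add_natCast_sub_one_ne_zero (h : ‖θ - 1‖ < ‖(q : ℚ_[p])‖) : θ + q - 1 ≠ 0 := by
  have h' : ‖(θ + q - 1) - q‖ < ‖(q : ℚ_[p])‖ := by rwa [add_sub_right_comm, add_sub_cancel_right]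
  rw [← norm_pos_iff, Padic.norm_eq_of_norm_sub_lt_right h']
  exact (norm_nonneg _).trans_lt h

lemma exists_pottsBethe_eq_near_xiCenter_of_ne_one (hp : 3 ≤ p) (hk : k ≠ 0) {ξ t : ℚ_[p]}
    (hξ : ξ ^ k = 1) (hξ1 : ξ ≠ 1) (hθ : θ ≠ 1) (hθq : ‖θ - 1‖ < ‖(q : ℚ_[p])‖) (ht : ‖t‖ < 1) :
    ∃ x, ‖x - xiCenter p q k θ ξ‖ < ‖(q : ℚ_[p]) * (θ - 1)‖ ∧
      pottsBethe p q k θ x = (1 + t) ^ k := by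
  have hq1 : ‖(q : ℚ_[p])‖ ≤ 1 := norm_natCast_le_one _ q
  have hξn : ‖ξ‖ = 1 := norm_eq_one_of_pow_eq_one hk hξ
  have h1ξ : ‖1 - ξ‖ = 1 := norm_one_sub_eq_one_of_pow_eq_one hp hk hξ hξ1
  have hξt : ‖ξ * t‖ < 1 := by rwa [norm_mul, hξn, one_mul]
  have hden : ‖θ - ξ * (1 + t)‖ = 1 := by
    have h : ‖(θ - ξ * (1 + t)) - (1 - ξ)‖ < ‖1 - ξ‖ := by
      rw [h1ξ, show θ - ξ * (1 + t) - (1 - ξ) = (θ - 1) - ξ * t by ring]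
      exact norm_sub_lt_of_lt (hθq.trans_le hq1) hξt
    rw [Padic.norm_eq_of_norm_sub_lt_right h, h1ξ]
  have hden0 : θ - ξ * (1 + t) ≠ 0 := norm_ne_zero_iff.1 (by rw [hden]; exact one_ne_zero)
  set N := (θ - 1) * (1 - ξ) - q * (θ - 1) + q * (ξ * t)
  have hN : ‖N‖ < ‖(q : ℚ_[p])‖ := by
    have hq : 0 < ‖(q : ℚ_[p])‖ := (norm_nonneg _).trans_lt hθq
    refine norm_add_lt_of_lt (norm_sub_lt_of_lt ?_ ?_) ?_ <;> rw [norm_mul]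
    · rwa [h1ξ, mul_one]
    · exact mul_lt_of_lt_one_right hq (hθq.trans_le hq1)
    · exact mul_lt_of_lt_one_right hq hξt
  have hdiff : mobiusInv q θ (ξ * (1 + t)) - xiCenter p q k θ ξ
      = (θ - 1) * N / ((θ - ξ * (1 + t)) * (1 - ξ)) := by
    rw [mobiusInv, xiCenter_of_ne_one hξ1]
    field_simp [hden0, sub_ne_zero.2 hξ1.symm]
    ring
  refine ⟨mobiusInv q θ (ξ * (1 + t)), ?_, ?_⟩
  · rw [hdiff, norm_div, norm_mul, norm_mul, hden, h1ξ, mul_one, div_one, norm_mul, mul_comm]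
    exact mul_lt_mul_of_pos_right hN (norm_pos_iff.2 (sub_ne_zero.2 hθ))
  · rw [pottsBethe_mobiusInv hθ (add_natCast_sub_one_ne_zero hθq) (sub_ne_zero.1 hden0), mul_pow,
      hξ, one_mul]

lemma exists_pottsBethe_eq_near_xiCenter_one (hp : 3 ≤ p) (hqk : ‖(q : ℚ_[p])‖ < ‖(k : ℚ_[p])‖)
    {t : ℚ_[p]} (ht : ‖t‖ ≤ ‖(q : ℚ_[p])‖ / ‖(k : ℚ_[p])‖) (hθ : θ ≠ 1)
    (hθq : ‖θ - 1‖ < ‖(q : ℚ_[p])‖ ^ 2) (hw : ‖(1 + t) ^ k - (1 - q)‖ ≤ ‖θ - 1‖) :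
    ∃ x, ‖x - xiCenter p q k θ 1‖ < ‖(q : ℚ_[p]) * (θ - 1)‖ ∧
      pottsBethe p q k θ x = (1 + t) ^ k := by
  set ρ := ‖(q : ℚ_[p])‖ / ‖(k : ℚ_[p])‖
  have hK : 0 < ‖(k : ℚ_[p])‖ := (norm_nonneg _).trans_lt hqk
  have hqρ : ‖(q : ℚ_[p])‖ = ‖(k : ℚ_[p])‖ * ρ := (mul_div_cancel₀ _ hK.ne').symm
  have hρp : ρ ≤ (p : ℝ)⁻¹ := (div_le_iff₀ hK).2 (Padic.norm_le_inv_mul_of_norm_lt hqk)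
  have hρ1 : ρ < 1 := (div_lt_one hK).2 hqk
  have hθ0 : 0 < ‖θ - 1‖ := norm_pos_iff.2 (sub_ne_zero.2 hθ)
  have hq : 0 < ‖(q : ℚ_[p])‖ := by nlinarith [norm_nonneg (q : ℚ_[p])]
  have hqρ' : ‖(q : ℚ_[p])‖ ≤ ρ :=
    (le_div_iff₀ hK).2 (mul_le_of_le_one_right hq.le (norm_natCast_le_one _ k))
  have hθqρ : ‖θ - 1‖ < ‖(q : ℚ_[p])‖ * ρ := hθq.trans_le (by rw [sq]; gcongr)
  have hθq' : ‖θ - 1‖ < ‖(q : ℚ_[p])‖ := hθqρ.trans_le (mul_le_of_le_one_right hq.le hρ1.le)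
  have hρ : 0 < ρ := hq.trans_le hqρ'
  have htρ : ‖t‖ = ρ := norm_eq_of_one_add_pow_near hp hρp hqρ ht (hw.trans hθqρ.le) hq
  have hden : ‖θ - (1 + t)‖ = ρ := by
    have h : ‖(θ - (1 + t)) - -t‖ < ‖-t‖ := by
      rw [norm_neg, htρ, show θ - (1 + t) - -t = θ - 1 by ring]
      exact hθq'.trans_le hqρ'
    rw [Padic.norm_eq_of_norm_sub_lt_right h, norm_neg, htρ]
  have hden0 : θ - (1 + t) ≠ 0 := norm_ne_zero_iff.1 (by rw [hden]; exact hρ.ne')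
  set c := centerCoeff p q k
  set E := (θ - 1) * -c + (q + t * (1 + c))
  have hE : ‖E‖ < ‖(q : ℚ_[p])‖ * ρ := by
    refine norm_add_lt_of_lt ?_
      (norm_add_mul_one_add_centerCoeff_lt hp hρp hqρ ht (hw.trans_lt hθqρ))
    rw [norm_mul, norm_neg]
    exact (mul_le_of_le_one_right hθ0.le (norm_centerCoeff_le_one hp hqk)).trans_lt hθqρ
  have hdiff : mobiusInv q θ (1 + t) - xiCenter p q k θ 1 = (θ - 1) * E / (θ - (1 + t)) := by
    rw [mobiusInv, xiCenter_one]
    field_simp [hden0]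
    ring
  refine ⟨mobiusInv q θ (1 + t), ?_, ?_⟩
  · rw [hdiff, norm_div, norm_mul, hden, div_lt_iff₀ hρ, norm_mul, mul_comm ‖(q : ℚ_[p])‖,
      mul_assoc]
    exact mul_lt_mul_of_pos_left hE hθ0
  · exact pottsBethe_mobiusInv hθ (add_natCast_sub_one_ne_zero hθq') (sub_ne_zero.1 hden0)

end PottsBethe

theorem stmt15_general (p : ℕ) [Fact p.Prime] (hp : 3 ≤ p) (q k : ℕ)
    (θ : ℚ_[p]) (hqk : ‖(q : ℚ_[p])‖ < ‖(k : ℚ_[p])‖)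
    (hθq : ‖θ - 1‖ < ‖(q : ℚ_[p])‖ ^ 2) :
    ∀ ξ ξ' : ℚ_[p], ξ ^ k = 1 → ξ' ^ k = 1 →
      ∀ y : ℚ_[p], ‖y - xiCenter p q k θ ξ‖ < ‖(q : ℚ_[p]) * (θ - 1)‖ →
        ∃ x : ℚ_[p], ‖x - xiCenter p q k θ ξ'‖ < ‖(q : ℚ_[p]) * (θ - 1)‖ ∧
          pottsBethe p q k θ x = y := by
  intro ξ ξ' hξ hξ' y hy
  have hK : 0 < ‖(k : ℚ_[p])‖ := (norm_nonneg _).trans_lt hqk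
  have hθ : θ ≠ 1 := by rintro rfl; exact (norm_nonneg _).not_gt (by simpa using hy)
  have hq1 : ‖(q : ℚ_[p])‖ ≤ 1 := norm_natCast_le_one _ q
  have hθq' : ‖θ - 1‖ < ‖(q : ℚ_[p])‖ := hθq.trans_le (pow_le_of_le_one (norm_nonneg _) hq1 two_ne_zero)
  have hy1 : ‖y - (1 - q)‖ ≤ ‖θ - 1‖ := by
    rw [← sub_add_sub_cancel y (xiCenter p q k θ ξ)]
    refine (norm_add_le_max _ _).trans (max_le ?_ (norm_xiCenter_sub_le hp hqk hξ))
    rw [norm_mul] at hy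
    exact hy.le.trans (mul_le_of_le_one_left (norm_nonneg _) hq1)
  have hyq : ‖y - 1‖ = ‖(q : ℚ_[p])‖ := by
    have h : ‖(y - 1) - -q‖ < ‖-(q : ℚ_[p])‖ := by
      rw [norm_neg, show y - 1 - -q = y - (1 - q) by ring]
      exact hy1.trans_lt hθq'
    rw [Padic.norm_eq_of_norm_sub_lt_right h, norm_neg]
  obtain ⟨t, ht, htρ⟩ := exists_one_add_pow_eq hp (w := y - 1) (hyq ▸ hqk)
  rw [add_sub_cancel] at ht
  rw [hyq] at htρ
  rw [← ht] at hy1 ⊢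
  by_cases hξ'1 : ξ' = 1
  · subst hξ'1
    exact exists_pottsBethe_eq_near_xiCenter_one hp hqk htρ hθ hθq hy1
  · exact exists_pottsBethe_eq_near_xiCenter_of_ne_one hp (norm_pos_iff.1 hK |> Nat.cast_ne_zero.1)
      hξ' hξ'1 hθ hθq' (htρ.trans_lt ((div_lt_one hK).2 hqk))

theorem stmt15 (p : ℕ) [Fact p.Prime] (hp : 3 ≤ p) (q k : ℕ) (hq : 1 ≤ q) (hk : 1 ≤ k)
    (θ : ℚ_[p]) (hqk : ‖(q : ℚ_[p])‖ < ‖(k : ℚ_[p])‖)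
    (hθq : ‖θ - 1‖ < ‖(q : ℚ_[p])‖ ^ 2) (hq2 : ‖(q : ℚ_[p])‖ ^ 2 < 1) :
    ∀ ξ ξ' : ℚ_[p], ξ ^ k = 1 → ξ' ^ k = 1 →
      ∀ y : ℚ_[p], ‖y - xiCenter p q k θ ξ‖ < ‖(q : ℚ_[p]) * (θ - 1)‖ →
        ∃ x : ℚ_[p], ‖x - xiCenter p q k θ ξ'‖ < ‖(q : ℚ_[p]) * (θ - 1)‖ ∧
          pottsBethe p q k θ x = y :=
  stmt15_general p hp q k θ hqk hθq
end
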